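/- For every element w of the Weyl group W(E₈), the inner product ⟨û₂, w(û₂)⟩ lies in the set {1, 3/4, 1/2, 1/4, 0, −1/4, −1/2, −3/4, −1}. (Equivalently: the distance on the unit sphere between two vertices of type 2 of the Coxeter complex of type E₈ is one of 0, arccos(3/4), π/3, arccos(1/4), π/2, arccos(−1/4), 2π/3, arccos(−3/4), π.) -/

import Mathlib

/-! Every simple root has integer inner products with all simple roots and squared length 2, so
each simple reflection `x ↦ x - ⟪x, r⟫ r` preserves the root lattice `L`, and hence so does
`W(E₈)`. The vector `2û₂` lies in `L` and `⟪û₂, r⟫ ∈ {0, ½}` for the simple roots, so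
`⟪û₂, w û₂⟫ = ½ ⟪û₂, w (2û₂)⟫ ∈ ¼ℤ`; Cauchy–Schwarz bounds it by `1` in absolute value. -/

noncomputable section

open scoped RealInnerProductSpace

/-- Euclidean space `ℝ⁸`. -/
abbrev E8Space := EuclideanSpace ℝ (Fin 8)

/-- The fundamental root vectors of the root system of type `E₈`:
`r₁ = ½(1,1,1,−1,−1,−1,−1,−1)` and `rᵢ = eᵢ − eᵢ₋₁` for `2 ≤ i ≤ 8`
(here indexed by `Fin 8`, so `j = 0` corresponds to `r₁`). -/
def E8root : Fin 8 → E8Space := fun j =>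
  if j = 0 then WithLp.toLp 2 (fun i => if (i : ℕ) < 3 then (1 : ℝ) / 2 else -(1 / 2))
  else WithLp.toLp 2 (fun i => if i = j then (1 : ℝ) else if (i : ℕ) + 1 = (j : ℕ) then -1 else 0)

/-- The Weyl group `W(E₈)`: the subgroup of linear isometries of `ℝ⁸` generated by the
reflections `s_r(x) = x − 2(⟨x,r⟩/⟨r,r⟩)r` in the fundamental root vectors. -/
def WeylE8 : Subgroup (E8Space ≃ₗᵢ[ℝ] E8Space) :=
  Subgroup.closure
    { f | ∃ j : Fin 8, ∀ x : E8Space,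
        f x = x - ((2 * ⟪x, E8root j⟫ / ⟪E8root j, E8root j⟫) • E8root j) }

/-- `û₂ = ¼(−3,−1,−1,−1,−1,−1,−1,−1)`, a unit vector representing a vertex of type 2. -/
def u2hat : E8Space := WithLp.toLp 2 (fun i => (if (i : ℕ) = 0 then -3 else -1) / 4)

open Set

section Reflection

variable {E : Type*} [NormedAddCommGroup E] [InnerProductSpace ℝ E]

theorem inner_mem_of_mem_closure_range {ι : Type*} {r : ι → E} {v : E} {S : AddSubgroup ℝ}
    (hr : ∀ j, ⟪v, r j⟫ ∈ S) {x : E} (hx : x ∈ AddSubgroup.closure (range r)) :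
    ⟪v, x⟫ ∈ S := by
  have : AddSubgroup.closure (range r) ≤ S.comap (innerₛₗ ℝ v).toAddMonoidHom :=
    (AddSubgroup.closure_le _).2 (range_subset_iff.2 hr)
  exact this hx

variable {r : E}

theorem inv_eq_self_of_eq_reflection {f : E ≃ₗᵢ[ℝ] E} (hr : r ≠ 0)
    (hf : ∀ x, f x = x - (2 * ⟪x, r⟫ / ⟪r, r⟫) • r) : f⁻¹ = f := by
  have hrr : ⟪r, r⟫ ≠ 0 := inner_self_ne_zero.2 hr
  refine inv_eq_of_mul_eq_one_left (LinearIsometryEquiv.ext fun x => ?_)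
  change f (f x) = x
  rw [hf, hf x, inner_sub_left, real_inner_smul_left]
  field_simp
  module

theorem mapsTo_of_eq_reflection {f : E → E} {L : AddSubgroup E} (hrL : r ∈ L)
    (hL : ∀ x ∈ L, 2 * ⟪x, r⟫ / ⟪r, r⟫ ∈ AddSubgroup.zmultiples (1 : ℝ))
    (hf : ∀ x, f x = x - (2 * ⟪x, r⟫ / ⟪r, r⟫) • r) : MapsTo f L L := by
  intro x hx
  obtain ⟨k, hk⟩ := AddSubgroup.mem_zmultiples_iff.1 (hL x hx)
  rw [hf, ← hk, zsmul_one, Int.cast_smul_eq_zsmul]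
  exact L.sub_mem hx (L.zsmul_mem hrL k)

end Reflection

theorem LinearIsometryEquiv.mapsTo_of_mem_closure {R E : Type*} [Semiring R]
    [SeminormedAddCommGroup E] [Module R E] {S : Set (E ≃ₗᵢ[R] E)} {L : Set E}
    (hS : ∀ f ∈ S, MapsTo f L L ∧ MapsTo ⇑f⁻¹ L L) {w : E ≃ₗᵢ[R] E}
    (hw : w ∈ Subgroup.closure S) : MapsTo w L L := by
  induction hw using Subgroup.closure_induction'' with
  | mem f hf => exact (hS f hf).1
  | inv_mem f hf => exact (hS f hf).2
  | one => exact mapsTo_id L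
  | mul a b _ _ ha hb => exact ha.comp hb

theorem mem_quarters_of_abs_le_one {n : ℤ} (h : |(n : ℝ) / 4| ≤ 1) :
    (n : ℝ) / 4 ∈ ({1, 3/4, 1/2, 1/4, 0, -1/4, -1/2, -3/4, -1} : Set ℝ) := by
  rw [abs_le] at h
  have hlo : -4 ≤ n := by exact_mod_cast (by linarith : (-4 : ℝ) ≤ n)
  have hhi : n ≤ 4 := by exact_mod_cast (by linarith : (n : ℝ) ≤ 4)
  interval_cases n <;> norm_num

theorem inner_E8root_E8root (j k : Fin 8) :
    ⟪E8root j, E8root k⟫ ∈ ({-1, 0, 2} : Set ℝ) := by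
  fin_cases j <;> fin_cases k <;>
    simp only [PiLp.inner_apply, Fin.sum_univ_eight] <;> norm_num +decide [E8root]

theorem inner_E8root_self (j : Fin 8) : ⟪E8root j, E8root j⟫ = 2 := by
  fin_cases j <;> simp only [PiLp.inner_apply, Fin.sum_univ_eight] <;> norm_num +decide [E8root]

theorem inner_u2hat_E8root (j : Fin 8) : ⟪u2hat, E8root j⟫ ∈ ({0, 1/2} : Set ℝ) := by
  fin_cases j <;> simp only [PiLp.inner_apply, Fin.sum_univ_eight] <;>
    norm_num +decide [u2hat, E8root]

theorem norm_u2hat : ‖u2hat‖ = 1 := by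
  rw [EuclideanSpace.norm_eq, Real.sqrt_eq_one]
  norm_num +decide [u2hat, Fin.sum_univ_eight]

/-- `2û₂` is the fundamental weight dual to `r₂`; its coefficients are a row of the inverse
Cartan matrix of `E₈`. -/
theorem two_zsmul_u2hat : (2 : ℤ) • u2hat =
    (5 : ℤ) • E8root 0 + (4 : ℤ) • E8root 1 + (7 : ℤ) • E8root 2 + (10 : ℤ) • E8root 3 +
      (8 : ℤ) • E8root 4 + (6 : ℤ) • E8root 5 + (4 : ℤ) • E8root 6 + (2 : ℤ) • E8root 7 := by
  ext i
  fin_cases i <;> norm_num +decide [u2hat, E8root]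

def E8rootLattice : AddSubgroup E8Space := AddSubgroup.closure (range E8root)

theorem inner_E8root_mem_zmultiples_one {x : E8Space} (hx : x ∈ E8rootLattice) (j : Fin 8) :
    ⟪x, E8root j⟫ ∈ AddSubgroup.zmultiples (1 : ℝ) := by
  rw [real_inner_comm]
  refine inner_mem_of_mem_closure_range (fun k => ?_) hx
  rcases inner_E8root_E8root j k with h | h | h <;> rw [h]
  exacts [by exact_mod_cast AddSubgroup.intCast_mem_zmultiples_one (-1),
    AddSubgroup.zero_mem _, by exact_mod_cast AddSubgroup.intCast_mem_zmultiples_one 2]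

theorem inner_u2hat_mem_zmultiples_half {x : E8Space} (hx : x ∈ E8rootLattice) :
    ⟪u2hat, x⟫ ∈ AddSubgroup.zmultiples (1 / 2 : ℝ) := by
  refine inner_mem_of_mem_closure_range (fun j => ?_) hx
  rcases inner_u2hat_E8root j with h | h <;> rw [h]
  exacts [AddSubgroup.zero_mem _, AddSubgroup.mem_zmultiples _]

theorem two_zsmul_u2hat_mem : (2 : ℤ) • u2hat ∈ E8rootLattice := by
  have hr (j : Fin 8) : E8root j ∈ E8rootLattice := AddSubgroup.subset_closure (mem_range_self j)
  rw [two_zsmul_u2hat]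
  apply_rules [add_mem, zsmul_mem]

theorem mapsTo_E8rootLattice {w : E8Space ≃ₗᵢ[ℝ] E8Space} (hw : w ∈ WeylE8) :
    MapsTo w E8rootLattice E8rootLattice := by
  refine LinearIsometryEquiv.mapsTo_of_mem_closure (fun f hS => ?_) hw
  obtain ⟨j, hf⟩ := hS
  have hr : E8root j ≠ 0 := fun h => by simpa [h] using inner_E8root_self j
  have hf' : MapsTo f E8rootLattice E8rootLattice :=
    mapsTo_of_eq_reflection (AddSubgroup.subset_closure (mem_range_self j))
      (fun x hx => by
        rw [inner_E8root_self, mul_div_cancel_left₀ _ two_ne_zero]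
        exact inner_E8root_mem_zmultiples_one hx j) hf
  exact ⟨hf', by rwa [inv_eq_self_of_eq_reflection hr hf]⟩

theorem inner_u2hat_orbit (w : E8Space ≃ₗᵢ[ℝ] E8Space) (hw : w ∈ WeylE8) :
    ⟪u2hat, w u2hat⟫ ∈
      ({1, 3/4, 1/2, 1/4, 0, -1/4, -1/2, -3/4, -1} : Set ℝ) := by
  have hlat : (2 : ℤ) • w u2hat ∈ E8rootLattice := by
    rw [← map_zsmul]
    exact mapsTo_E8rootLattice hw two_zsmul_u2hat_mem
  obtain ⟨n, hn⟩ := AddSubgroup.mem_zmultiples_iff.1 (inner_u2hat_mem_zmultiples_half hlat)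
  have hquarter : ⟪u2hat, w u2hat⟫ = n / 4 := by
    rw [zsmul_eq_mul, ← Int.cast_smul_eq_zsmul ℝ (2 : ℤ), real_inner_smul_right] at hn
    linarith
  have hcs : |⟪u2hat, w u2hat⟫| ≤ 1 := by
    simpa [norm_u2hat] using abs_real_inner_le_norm u2hat (w u2hat)
  rw [hquarter] at hcs ⊢
  exact mem_quarters_of_abs_le_one hcs
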